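/- arXiv:2511.04608 — 3 statements merged into one kernel-verified Lean document; each statement's English description precedes it below -/
import Mathlib

section
/- Let A and B be Hermitian matrices whose eigenvalues all lie in the interval [-2, 2). If exp(-i(π/2)A) and exp(-i(π/2)B) commute, then A and B commute. -/
/-!
Conjugating by the eigenvector unitary, `exp (s • A)` is diagonal with entries `exp (s λᵢ)`.
For `s = -iπ/2` the map `λ ↦ exp (s λ)` is injective on `[-2, 2)`, so a Lagrange polynomial `p`
with `p (exp (s λ)) = λ` on the eigenvalues of both matrices gives `A = p (exp (s • A))` and
`B = p (exp (s • B))`; polynomials in commuting matrices commute.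
-/

open Matrix Polynomial Complex

theorem Matrix.aeval_diagonal {n R : Type*} [Fintype n] [DecidableEq n] [CommRing R]
    (d : n → R) (p : R[X]) : aeval (diagonal d) p = diagonal fun i => p.eval (d i) := by
  rw [← diagonalAlgHom_apply (R := R), aeval_algHom_apply]
  simp [aeval_pi_apply]

theorem Commute.aeval {R A : Type*} [CommSemiring R] [Semiring A] [Algebra R A] {a b : A}
    (h : Commute a b) (p q : R[X]) : Commute (aeval a p) (aeval b q) :=
  Algebra.commute_of_mem_adjoin_singleton_of_commute (aeval_mem_adjoin_singleton R b)
    (Algebra.commute_of_mem_adjoin_singleton_of_commute (aeval_mem_adjoin_singleton R a)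
      h.symm).symm

namespace Matrix.IsHermitian

variable {n : Type*} [Fintype n] [DecidableEq n] {A : Matrix n n ℂ}

theorem exp_smul_eq (hA : A.IsHermitian) (s : ℂ) :
    NormedSpace.exp (s • A) = Unitary.conjStarAlgAut ℂ _ hA.eigenvectorUnitary
      (diagonal fun i => cexp (s * hA.eigenvalues i)) := by
  conv_lhs => rw [hA.spectral_theorem, ← map_smul, ← diagonal_smul]
  refine (exp_units_conj (Unitary.toUnits hA.eigenvectorUnitary) _).trans ?_
  rw [exp_diagonal]
  congr 3
  funext i
  simp [exp_eq_exp_ℂ]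

theorem aeval_exp_smul_eq_self (hA : A.IsHermitian) {s : ℂ} {p : ℂ[X]}
    (hp : ∀ i, p.eval (cexp (s * hA.eigenvalues i)) = hA.eigenvalues i) :
    aeval (NormedSpace.exp (s • A)) p = A := by
  rw [hA.exp_smul_eq, aeval_algHom_apply, aeval_diagonal]
  simp only [hp]
  exact hA.spectral_theorem.symm

theorem commute_of_commute_exp_smul {B : Matrix n n ℂ} (hA : A.IsHermitian)
    (hB : B.IsHermitian) {s : ℂ}
    (hinj : Set.InjOn (fun x : ℝ => cexp (s * x))
      (Set.range hA.eigenvalues ∪ Set.range hB.eigenvalues))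
    (h : Commute (NormedSpace.exp (s • A)) (NormedSpace.exp (s • B))) :
    Commute A B := by
  set nodes : Finset ℝ := Finset.univ.image hA.eigenvalues ∪ Finset.univ.image hB.eigenvalues
  have hnodes : Set.InjOn (fun x : ℝ => cexp (s * x)) nodes := by simpa [nodes] using hinj
  set p := Lagrange.interpolate nodes (fun x : ℝ => cexp (s * x)) (fun x => (x : ℂ))
  have hp : ∀ x ∈ nodes, p.eval (cexp (s * x)) = x := fun x hx =>
    Lagrange.eval_interpolate_at_node _ hnodes hx
  rw [← hA.aeval_exp_smul_eq_self (p := p) fun i => hp _ (by simp [nodes]),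
    ← hB.aeval_exp_smul_eq_self (p := p) fun i => hp _ (by simp [nodes])]
  exact h.aeval p p

end Matrix.IsHermitian

theorem injOn_cexp_neg_pi_div_two_mul_I_mul_Ico :
    Set.InjOn (fun x : ℝ => cexp (-(Real.pi / 2 : ℂ) * I * x)) (Set.Ico (-2) 2) := by
  intro x hx y hy hxy
  have hlog : ∀ z ∈ Set.Ico (-2 : ℝ) 2,
      log (cexp (-(Real.pi / 2 : ℂ) * I * z)) = -(Real.pi / 2 : ℂ) * I * z := by
    intro z hz
    have him : (-(Real.pi / 2 : ℂ) * I * z).im = -(Real.pi / 2) * z := by simp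
    apply log_exp <;> rw [him] <;> nlinarith [Real.pi_pos, hz.1, hz.2]
  have hs : -(Real.pi / 2 : ℂ) * I ≠ 0 := by simp [Real.pi_ne_zero]
  have := congrArg log hxy
  simp only [hlog x hx, hlog y hy] at this
  exact_mod_cast mul_left_cancel₀ hs this

theorem exp_commute_of_hermitian_eigenvalues_Ico
    {n : ℕ} (A B : Matrix (Fin n) (Fin n) ℂ)
    (hA : A.IsHermitian) (hB : B.IsHermitian)
    (hAe : ∀ i, hA.eigenvalues i ∈ Set.Ico (-2 : ℝ) 2)
    (hBe : ∀ i, hB.eigenvalues i ∈ Set.Ico (-2 : ℝ) 2)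
    (h : Commute (NormedSpace.exp ((-(Real.pi / 2 : ℂ) * Complex.I) • A))
      (NormedSpace.exp ((-(Real.pi / 2 : ℂ) * Complex.I) • B))) :
    Commute A B :=
  hA.commute_of_commute_exp_smul hB
    (injOn_cexp_neg_pi_div_two_mul_I_mul_Ico.mono <| Set.union_subset
      (Set.range_subset_iff.2 hAe) (Set.range_subset_iff.2 hBe)) h
end

section
/- Let P₁ = (a₁ X₁X₂ + b₁ Y₁Y₂ + c₁ Z₁Z₂) ⊗ I₃ and P₂ = I₁ ⊗ (a₂ X₂X₃ + b₂ Y₂Y₃ + c₂ Z₂Z₃) be operators on three qubits, with real coefficients satisfying |c₁| ≤ b₁ ≤ a₁ ≤ 1/2 and |c₂| ≤ b₂ ≤ a₂ ≤ 1/2. If [P₁, P₂] = 0 and P₁, P₂ ≠ 0, then b₁ = b₂ = c₁ = c₂ = 0. -/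
open Matrix Kronecker

set_option maxHeartbeats 2000000

noncomputable section

def PX : Matrix (Fin 2) (Fin 2) ℂ := !![0, 1; 1, 0]
def PY : Matrix (Fin 2) (Fin 2) ℂ := !![0, -Complex.I; Complex.I, 0]
def PZ : Matrix (Fin 2) (Fin 2) ℂ := !![1, 0; 0, -1]

/-- `(a X₁X₂ + b Y₁Y₂ + c Z₁Z₂) ⊗ I₃` acting on three qubits. -/
def P12 (a b c : ℝ) : Matrix ((Fin 2 × Fin 2) × Fin 2) ((Fin 2 × Fin 2) × Fin 2) ℂ :=
  ((a : ℂ) • (PX ⊗ₖ PX) + (b : ℂ) • (PY ⊗ₖ PY) + (c : ℂ) • (PZ ⊗ₖ PZ)) ⊗ₖ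
    (1 : Matrix (Fin 2) (Fin 2) ℂ)

/-- `I₁ ⊗ (a X₂X₃ + b Y₂Y₃ + c Z₂Z₃)` acting on three qubits (written with the same
index association `(q₁ × q₂) × q₃` as `P12`, using bilinearity of the Kronecker product). -/
def P23 (a b c : ℝ) : Matrix ((Fin 2 × Fin 2) × Fin 2) ((Fin 2 × Fin 2) × Fin 2) ℂ :=
  (a : ℂ) • ((1 : Matrix (Fin 2) (Fin 2) ℂ) ⊗ₖ PX ⊗ₖ PX) +
    (b : ℂ) • ((1 : Matrix (Fin 2) (Fin 2) ℂ) ⊗ₖ PY ⊗ₖ PY) +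
    (c : ℂ) • ((1 : Matrix (Fin 2) (Fin 2) ℂ) ⊗ₖ PZ ⊗ₖ PZ)

theorem pauli_sum_commute_coeffs_vanish
    (a₁ b₁ c₁ a₂ b₂ c₂ : ℝ)
    (h1 : |c₁| ≤ b₁) (h1' : b₁ ≤ a₁) (h1'' : a₁ ≤ 1 / 2)
    (h2 : |c₂| ≤ b₂) (h2' : b₂ ≤ a₂) (h2'' : a₂ ≤ 1 / 2)
    (hcomm : P12 a₁ b₁ c₁ * P23 a₂ b₂ c₂ - P23 a₂ b₂ c₂ * P12 a₁ b₁ c₁ = 0)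
    (hP1 : P12 a₁ b₁ c₁ ≠ 0) (hP2 : P23 a₂ b₂ c₂ ≠ 0) :
    b₁ = 0 ∧ b₂ = 0 ∧ c₁ = 0 ∧ c₂ = 0 := by
  have hEq : P12 a₁ b₁ c₁ * P23 a₂ b₂ c₂ = P23 a₂ b₂ c₂ * P12 a₁ b₁ c₁ := sub_eq_zero.mp hcomm
  have e1 := congrFun (congrFun hEq ((0,0),0)) ((0,1),1)
  have e2 := congrFun (congrFun hEq ((0,0),1)) ((0,1),0)
  have e3 := congrFun (congrFun hEq ((0,0),0)) ((1,1),0)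
  have e4 := congrFun (congrFun hEq ((0,1),0)) ((1,0),0)
  have e5 := congrFun (congrFun hEq ((0,0),0)) ((1,0),1)
  have e6 := congrFun (congrFun hEq ((0,0),1)) ((1,0),0)
  simp [P12, P23, PX, PY, PZ, Matrix.mul_apply, Fintype.sum_prod_type, Fin.sum_univ_two,
    Matrix.one_apply] at e1 e2 e3 e4 e5 e6
  -- translate the complex entry equations into real equations
  have r1 : c₁ * (a₂ - b₂) = 0 := by
    have h : ((c₁ * (a₂ - b₂) : ℝ) : ℂ) = ((0 : ℝ) : ℂ) := by
      push_cast
      linear_combination (1/2 : ℂ) * e1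
    exact_mod_cast h
  have r2 : c₁ * (a₂ + b₂) = 0 := by
    have h : ((c₁ * (a₂ + b₂) : ℝ) : ℂ) = ((0 : ℝ) : ℂ) := by
      push_cast; linear_combination (1/2 : ℂ) * e2
    exact_mod_cast h
  have r3 : c₂ * (a₁ - b₁) = 0 := by
    have h : ((c₂ * (a₁ - b₁) : ℝ) : ℂ) = ((0 : ℝ) : ℂ) := by
      push_cast; linear_combination (-1/2 : ℂ) * e3
    exact_mod_cast h
  have r4 : c₂ * (a₁ + b₁) = 0 := by
    have h : ((c₂ * (a₁ + b₁) : ℝ) : ℂ) = ((0 : ℝ) : ℂ) := by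
      push_cast; linear_combination (1/2 : ℂ) * e4
    exact_mod_cast h
  have r5 : a₁ * b₂ - b₁ * a₂ = 0 := by
    have h : ((a₁ * b₂ - b₁ * a₂ : ℝ) : ℂ) = ((0 : ℝ) : ℂ) := by
      push_cast; linear_combination (1/2 : ℂ) * e5
    exact_mod_cast h
  have r6 : a₁ * b₂ + b₁ * a₂ = 0 := by
    have h : ((a₁ * b₂ + b₁ * a₂ : ℝ) : ℂ) = ((0 : ℝ) : ℂ) := by
      push_cast; linear_combination (-1/2 : ℂ) * e6
    exact_mod_cast h
  -- positivity of the leading coefficients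
  have hb1 : 0 ≤ b₁ := le_trans (abs_nonneg c₁) h1
  have hb2 : 0 ≤ b₂ := le_trans (abs_nonneg c₂) h2
  have ha1 : 0 < a₁ := by
    rcases lt_or_eq_of_le (hb1.trans h1') with h | h
    · exact h
    · exfalso
      have hb : b₁ = 0 := le_antisymm (h1'.trans h.symm.le) hb1
      have hc : c₁ = 0 := abs_nonpos_iff.mp (h1.trans_eq hb)
      apply hP1
      rw [← h, hb, hc]
      simp [P12]
  have ha2 : 0 < a₂ := by
    rcases lt_or_eq_of_le (hb2.trans h2') with h | h
    · exact h
    · exfalso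
      have hb : b₂ = 0 := le_antisymm (h2'.trans h.symm.le) hb2
      have hc : c₂ = 0 := abs_nonpos_iff.mp (h2.trans_eq hb)
      apply hP2
      rw [← h, hb, hc]
      simp [P23]
  -- conclude
  have hb2z : b₂ = 0 := by nlinarith [mul_nonneg hb1 ha2.le, mul_nonneg ha1.le hb2]
  have hb1z : b₁ = 0 := by nlinarith [mul_nonneg hb1 ha2.le, mul_nonneg ha1.le hb2]
  have hc1z : c₁ = 0 := by
    have : c₁ * a₂ = 0 := by linarith
    rcases mul_eq_zero.mp this with h | h
    · exact h
    · exact absurd h ha2.ne'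
  have hc2z : c₂ = 0 := by
    have : c₂ * a₁ = 0 := by linarith
    rcases mul_eq_zero.mp this with h | h
    · exact h
    · exact absurd h ha1.ne'
  exact ⟨hb1z, hb2z, hc1z, hc2z⟩
end
end

section
/- Two canonical gates Can(a,b,c) acting on qubits (q₀,q₁) and Can(a',b',c') acting on qubits (q₁,q₂), sharing exactly the qubit q₁, commute if and only if b = b' = c = c' = 0 (assuming both gates are nontrivial, i.e., the coefficient vectors are nonzero, and coefficients satisfy |c| ≤ b ≤ a ≤ 1/2 and |c'| ≤ b' ≤ a' ≤ 1/2). -/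
/-!
The two-qubit operators XX, YY, ZZ are commuting involutions with XX·YY = −ZZ, so
`Can(a,b,c) = α + β_X XX + β_Y YY + β_Z ZZ` with explicit trigonometric coefficients, where β_Y
and β_Z are β_X with its arguments permuted. The commutator of two such gates sharing the middle
qubit is `Σ β_P β'_Q P ⊗ [P,Q] ⊗ Q`; its X⊗Z⊗Y and Y⊗Z⊗X components force
`β_X β'_Y = β_Y β'_X = 0`. In the Weyl chamber, `Im β_X = −sin(πa/2) cos(πb/2) cos(πc/2)` vanishes
only for `a = 0`, so β_X, β'_X ≠ 0, hence β_Y = β'_Y = 0, i.e. `b = b' = 0`, and then `c = c' = 0`.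
Conversely, for `b = c = b' = c' = 0` both gates are exponentials of the commuting X⊗X⊗1 and 1⊗X⊗X.
-/

open Matrix Kronecker

noncomputable section

/-- The canonical gate `Can(a,b,c)` acting on qubits 1,2 of three qubits. -/
def Can12 (a b c : ℝ) : Matrix ((Fin 2 × Fin 2) × Fin 2) ((Fin 2 × Fin 2) × Fin 2) ℂ :=
  NormedSpace.exp ((-(Real.pi / 2 : ℂ) * Complex.I) • P12 a b c)

/-- The canonical gate `Can(a,b,c)` acting on qubits 2,3 of three qubits. -/
def Can23 (a b c : ℝ) : Matrix ((Fin 2 × Fin 2) × Fin 2) ((Fin 2 × Fin 2) × Fin 2) ℂ :=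
  NormedSpace.exp ((-(Real.pi / 2 : ℂ) * Complex.I) • P23 a b c)

open Real in
def canCoeff (a b c : ℝ) : ℂ :=
  (cos (π * a / 2) * sin (π * b / 2) * sin (π * c / 2) : ℝ) -
    (sin (π * a / 2) * cos (π * b / 2) * cos (π * c / 2) : ℝ) * Complex.I

open Real in
def canIdCoeff (a b c : ℝ) : ℂ :=
  (cos (π * a / 2) * cos (π * b / 2) * cos (π * c / 2) : ℝ) -
    (sin (π * a / 2) * sin (π * b / 2) * sin (π * c / 2) : ℝ) * Complex.I

section
variable {𝔸 : Type*} [NormedRing 𝔸] [NormedAlgebra ℂ 𝔸] [CompleteSpace 𝔸]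

open Complex in
theorem exp_smul_of_mul_self_eq_one {M : 𝔸} (hM : M * M = 1) (z : ℂ) :
    NormedSpace.exp (z • M) = cosh z • 1 + sinh z • M := by
  have hpow (n : ℕ) : M ^ (2 * n) = 1 := by rw [pow_mul, sq, hM, one_pow]
  refine (NormedSpace.exp_series_hasSum_exp' (𝕂 := ℂ) (z • M)).unique ?_
  refine HasSum.even_add_odd ?_ ?_
  · convert (hasSum_cosh z).smul_const (1 : 𝔸) using 2 with n
    rw [smul_pow, hpow, smul_smul, div_eq_inv_mul]
  · convert (hasSum_sinh z).smul_const M using 2 with n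
    rw [smul_pow, pow_succ M, hpow, one_mul, smul_smul, div_eq_inv_mul]

open Complex in
theorem exp_rotation_of_mul_self_eq_one {M : 𝔸} (hM : M * M = 1) (x : ℝ) :
    NormedSpace.exp ((-(Real.pi / 2 : ℂ) * I * x) • M) =
      (Real.cos (Real.pi * x / 2) : ℂ) • 1 - ((Real.sin (Real.pi * x / 2) : ℂ) * I) • M := by
  have hz : -(Real.pi / 2 : ℂ) * I * x = ((-(Real.pi * x / 2) : ℝ) : ℂ) * I := by
    push_cast; ring
  rw [exp_smul_of_mul_self_eq_one hM, hz, cosh_mul_I, sinh_mul_I, ← ofReal_cos, ← ofReal_sin,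
    Real.cos_neg, Real.sin_neg, ofReal_neg, neg_mul, neg_smul, sub_eq_add_neg]

theorem exp_canonical {X Y Z : 𝔸} (hX : X * X = 1) (hY : Y * Y = 1) (hXY : Commute X Y)
    (hZ : X * Y = -Z) (a b c : ℝ) :
    NormedSpace.exp ((-(Real.pi / 2 : ℂ) * Complex.I) • ((a : ℂ) • X + (b : ℂ) • Y + (c : ℂ) • Z)) =
      canIdCoeff a b c • 1 + canCoeff a b c • X + canCoeff b a c • Y + canCoeff c b a • Z := by
  have hZ' : Z = -(X * Y) := by rw [hZ, neg_neg]
  have hXZ : X * Z = -Y := by rw [hZ', mul_neg, ← mul_assoc, hX, one_mul]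
  have hZX : Z * X = -Y := by rw [hZ', neg_mul, hXY.eq, mul_assoc, hX, mul_one]
  have hYZ : Y * Z = -X := by rw [hZ', mul_neg, ← mul_assoc, ← hXY.eq, mul_assoc, hY, mul_one]
  have hZY : Z * Y = -X := by rw [hZ', neg_mul, mul_assoc, hY, mul_one]
  have hZZ : Z * Z = 1 := by nth_rw 2 [hZ']; rw [mul_neg, ← mul_assoc, hZX, neg_mul, neg_neg, hY]
  let +nondep : NormedAlgebra ℚ 𝔸 := .restrictScalars ℚ ℂ 𝔸
  have hXZc : Commute X Z := hXZ.trans hZX.symm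
  have hYZc : Commute Y Z := hYZ.trans hZY.symm
  simp only [smul_add, smul_smul]
  rw [NormedSpace.exp_add_of_commute (((hXZc.smul_left _).smul_right _).add_left
      ((hYZc.smul_left _).smul_right _)),
    NormedSpace.exp_add_of_commute ((hXY.smul_left _).smul_right _),
    exp_rotation_of_mul_self_eq_one hX, exp_rotation_of_mul_self_eq_one hY,
    exp_rotation_of_mul_self_eq_one hZZ]
  simp only [canCoeff, canIdCoeff, sub_mul, mul_sub, smul_mul_smul_comm, one_mul, mul_one,
    hZ, hXZ, hYZ, hZZ, neg_mul]
  match_scalars <;> ring_nf <;> simp only [Complex.I_sq, Complex.I_pow_three] <;> ring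

end

theorem PX_mul_PX : PX * PX = 1 := by
  ext i j; fin_cases i <;> fin_cases j <;> simp [PX, Matrix.mul_apply]

theorem PY_mul_PY : PY * PY = 1 := by
  ext i j; fin_cases i <;> fin_cases j <;> simp [PY, Matrix.mul_apply]

theorem PX_mul_PY : PX * PY = Complex.I • PZ := by
  ext i j; fin_cases i <;> fin_cases j <;> simp [PX, PY, PZ, Matrix.mul_apply]

theorem PY_mul_PX : PY * PX = -Complex.I • PZ := by
  ext i j; fin_cases i <;> fin_cases j <;> simp [PX, PY, PZ, Matrix.mul_apply]

abbrev Qubits3 := (Fin 2 × Fin 2) × Fin 2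

def pauliPair12 (P : Matrix (Fin 2) (Fin 2) ℂ) : Matrix Qubits3 Qubits3 ℂ := (P ⊗ₖ P) ⊗ₖ 1

def pauliPair23 (P : Matrix (Fin 2) (Fin 2) ℂ) : Matrix Qubits3 Qubits3 ℂ := (1 ⊗ₖ P) ⊗ₖ P

section
variable {P Q R : Matrix (Fin 2) (Fin 2) ℂ} {ω : ℂ}

theorem pauliPair12_mul_self (hP : P * P = 1) : pauliPair12 P * pauliPair12 P = 1 := by
  simp [pauliPair12, ← mul_kronecker_mul, hP]

theorem pauliPair23_mul_self (hP : P * P = 1) : pauliPair23 P * pauliPair23 P = 1 := by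
  simp [pauliPair23, ← mul_kronecker_mul, hP]

theorem pauliPair12_mul_eq_neg (h : P * Q = ω • R) (hω : ω * ω = -1) :
    pauliPair12 P * pauliPair12 Q = -pauliPair12 R := by
  simp only [pauliPair12, ← mul_kronecker_mul, h, one_mul, smul_kronecker, kronecker_smul, smul_smul,
    hω]
  exact neg_one_smul ℂ _

theorem pauliPair23_mul_eq_neg (h : P * Q = ω • R) (hω : ω * ω = -1) :
    pauliPair23 P * pauliPair23 Q = -pauliPair23 R := by
  simp only [pauliPair23, ← mul_kronecker_mul, h, one_mul, smul_kronecker, kronecker_smul, smul_smul,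
    hω]
  exact neg_one_smul ℂ _

theorem commute_pauliPair12_pauliPair23 (h : Commute P Q) :
    Commute (pauliPair12 P) (pauliPair23 Q) := by
  simp [Commute, SemiconjBy, pauliPair12, pauliPair23, ← mul_kronecker_mul, h.eq]

end

theorem P12_eq (a b c : ℝ) :
    P12 a b c = (a : ℂ) • pauliPair12 PX + (b : ℂ) • pauliPair12 PY + (c : ℂ) • pauliPair12 PZ := by
  simp only [P12, add_kronecker, smul_kronecker, pauliPair12]

section
attribute [local instance] Matrix.linftyOpNormedRing Matrix.linftyOpNormedAlgebra

theorem Can12_eq (a b c : ℝ) :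
    Can12 a b c = canIdCoeff a b c • 1 + canCoeff a b c • pauliPair12 PX +
      canCoeff b a c • pauliPair12 PY + canCoeff c b a • pauliPair12 PZ := by
  rw [Can12, P12_eq]
  exact exp_canonical (pauliPair12_mul_self PX_mul_PX) (pauliPair12_mul_self PY_mul_PY)
    ((pauliPair12_mul_eq_neg PX_mul_PY Complex.I_mul_I).trans
      (pauliPair12_mul_eq_neg PY_mul_PX (by simp)).symm)
    (pauliPair12_mul_eq_neg PX_mul_PY Complex.I_mul_I) a b c

theorem Can23_eq (a b c : ℝ) :
    Can23 a b c = canIdCoeff a b c • 1 + canCoeff a b c • pauliPair23 PX +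
      canCoeff b a c • pauliPair23 PY + canCoeff c b a • pauliPair23 PZ :=
  exp_canonical (pauliPair23_mul_self PX_mul_PX) (pauliPair23_mul_self PY_mul_PY)
    ((pauliPair23_mul_eq_neg PX_mul_PY Complex.I_mul_I).trans
      (pauliPair23_mul_eq_neg PY_mul_PX (by simp)).symm)
    (pauliPair23_mul_eq_neg PX_mul_PY Complex.I_mul_I) a b c

end

theorem commute_Can12_zero_Can23_zero (a a' : ℝ) : Commute (Can12 a 0 0) (Can23 a' 0 0) := by
  simp only [Can12, Can23, P12_eq, P23, Complex.ofReal_zero, zero_smul, add_zero]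
  exact ((((commute_pauliPair12_pauliPair23 (Commute.refl PX)).smul_left _).smul_right _
    ).smul_left _ |>.smul_right _).exp

theorem coeff_mul_eq_zero_of_commute {α x y z α' x' y' z' : ℂ}
    (h : Commute (α • 1 + x • pauliPair12 PX + y • pauliPair12 PY + z • pauliPair12 PZ)
      (α' • 1 + x' • pauliPair23 PX + y' • pauliPair23 PY + z' • pauliPair23 PZ)) :
    x * y' = 0 ∧ y * x' = 0 := by
  -- Of the commutator `Σ β_P β'_Q P ⊗ [P,Q] ⊗ Q`, only the X⊗Z⊗Y and Y⊗Z⊗X terms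
  -- are nonzero at these two entries.
  have e1 := congrFun₂ h.eq ((0, 0), 0) ((1, 0), 1)
  have e2 := congrFun₂ h.eq ((0, 0), 1) ((1, 0), 0)
  simp only [pauliPair12, PX, PY, PZ, pauliPair23, Fin.isValue, Matrix.mul_apply, Matrix.add_apply,
    Matrix.smul_apply, Matrix.one_apply, smul_eq_mul, mul_ite, mul_one, mul_zero, kroneckerMap_apply,
    of_apply, cons_val', cons_val_fin_one, cons_val_zero, ite_mul, one_mul, zero_mul, cons_val_one,
    Fintype.sum_prod_type, Prod.mk.injEq, Fin.sum_univ_two, and_true, ↓reduceIte, zero_ne_one,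
    and_false, zero_add, mul_neg, ite_self, add_zero, neg_zero, Complex.I_mul_I, neg_neg, neg_mul,
    one_ne_zero] at e1 e2
  constructor
  · linear_combination (e1 - e2) / 4
  · linear_combination -(e1 + e2) / 4

open Real in
theorem eq_zero_of_canCoeff_eq_zero {a b c : ℝ} (h : canCoeff a b c = 0) (ha : |a| < 2)
    (hb : |b| < 1) (hc : |c| < 1) : a = 0 := by
  have hcos {x : ℝ} (hx : |x| < 1) : 0 < cos (π * x / 2) := by
    obtain ⟨hl, hr⟩ := abs_lt.1 hx
    exact cos_pos_of_mem_Ioo ⟨by nlinarith [pi_pos], by nlinarith [pi_pos]⟩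
  have hsin : sin (π * a / 2) = 0 := by
    have him := congrArg Complex.im h
    simp only [canCoeff, Complex.sub_im, Complex.ofReal_im, Complex.mul_im, Complex.ofReal_re,
      Complex.I_re, Complex.I_im, Complex.zero_im, mul_one, mul_zero, add_zero, zero_sub,
      neg_eq_zero] at him
    exact (mul_eq_zero.1 ((mul_eq_zero.1 him).resolve_right (hcos hc).ne')).resolve_right
      (hcos hb).ne'
  obtain ⟨hl, hr⟩ := abs_lt.1 ha
  rw [sin_eq_zero_iff_of_lt_of_lt (by nlinarith [pi_pos]) (by nlinarith [pi_pos])] at hsin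
  simpa [pi_ne_zero] using hsin

theorem pos_of_abs_le_of_le {a b c : ℝ} (h1 : |c| ≤ b) (h1' : b ≤ a)
    (hne : ¬(a = 0 ∧ b = 0 ∧ c = 0)) : 0 < a := by
  have hb := (abs_nonneg c).trans h1
  refine (hb.trans h1').lt_of_ne fun ha => hne ⟨ha.symm, ?_, ?_⟩
  · linarith
  · exact abs_nonpos_iff.1 (h1.trans (ha ▸ h1'))

theorem abs_lt_one_of_abs_le_of_le {a b c : ℝ} (h1 : |c| ≤ b) (h1' : b ≤ a) (h1'' : a ≤ 1 / 2) :
    |a| < 1 ∧ |b| < 1 ∧ |c| < 1 := by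
  have hb := (abs_nonneg c).trans h1
  refine ⟨?_, ?_, ?_⟩ <;> rw [abs_lt] <;> constructor <;> linarith [neg_abs_le c, le_abs_self c]

theorem canonical_gates_commute_iff
    (a b c a' b' c' : ℝ)
    (h1 : |c| ≤ b) (h1' : b ≤ a) (h1'' : a ≤ 1 / 2)
    (h2 : |c'| ≤ b') (h2' : b' ≤ a') (h2'' : a' ≤ 1 / 2)
    (hne : ¬(a = 0 ∧ b = 0 ∧ c = 0)) (hne' : ¬(a' = 0 ∧ b' = 0 ∧ c' = 0)) :
    Commute (Can12 a b c) (Can23 a' b' c') ↔ (b = 0 ∧ b' = 0 ∧ c = 0 ∧ c' = 0) := by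
  refine ⟨fun h => ?_, fun ⟨hb, hb', hc, hc'⟩ => ?_⟩
  · obtain ⟨ha, hb, hc⟩ := abs_lt_one_of_abs_le_of_le h1 h1' h1''
    obtain ⟨ha', hb', hc'⟩ := abs_lt_one_of_abs_le_of_le h2 h2' h2''
    have hX : canCoeff a b c ≠ 0 := fun h0 => (pos_of_abs_le_of_le h1 h1' hne).ne'
      (eq_zero_of_canCoeff_eq_zero h0 (ha.trans one_lt_two) hb hc)
    have hX' : canCoeff a' b' c' ≠ 0 := fun h0 => (pos_of_abs_le_of_le h2 h2' hne').ne'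
      (eq_zero_of_canCoeff_eq_zero h0 (ha'.trans one_lt_two) hb' hc')
    rw [Can12_eq, Can23_eq] at h
    obtain ⟨hXY, hYX⟩ := coeff_mul_eq_zero_of_commute h
    have hb0 : b = 0 := eq_zero_of_canCoeff_eq_zero
      ((mul_eq_zero.1 hYX).resolve_right hX') (hb.trans one_lt_two) ha hc
    have hb0' : b' = 0 := eq_zero_of_canCoeff_eq_zero
      ((mul_eq_zero.1 hXY).resolve_left hX) (hb'.trans one_lt_two) ha' hc'
    exact ⟨hb0, hb0', abs_nonpos_iff.1 (hb0 ▸ h1), abs_nonpos_iff.1 (hb0' ▸ h2)⟩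
  · subst hb hb' hc hc'
    exact commute_Can12_zero_Can23_zero a a'
end
end
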